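/- Let $\mathbf{c}, \mu \in \mathbb{R}^d$ with $\|\mu - \mathbf{c}\| \geq 4 r_0$ for some $r_0 > 0$, and let $\mathbf{g}$ be a unit vector and $d$ a real number satisfying $d \geq \|\mu - \mathbf{c}\| - r_0$ and such that there exists an index $j$ with $\langle \mathbf{Q}_j - \mathbf{c}, \mathbf{g}\rangle \geq d$ and $\langle \mathbf{Q}_j - \mu, \mathbf{g}\rangle \leq r_0$. Then $\left\langle \mathbf{g}, \frac{\mu - \mathbf{c}}{\|\mu - \mathbf{c}\|}\right\rangle \geq \frac{1}{2}$. -/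

import Mathlib

/-! The point `Q j` certifies `⟪Q j - c, g⟫ ≥ ‖μ - c‖ - r₀` and `⟪Q j - μ, g⟫ ≤ r₀`; subtracting gives
`⟪μ - c, g⟫ ≥ ‖μ - c‖ - 2 r₀ ≥ ‖μ - c‖ / 2`, because `μ` is at distance at least `4 r₀` from `c`. -/

section

variable {E : Type*} [NormedAddCommGroup E] [InnerProductSpace ℝ E]

theorem half_le_inner_smul_inv_norm {v g : E} (hv : 0 < ‖v‖) (h : ‖v‖ / 2 ≤ inner ℝ v g) :
    (1 : ℝ) / 2 ≤ inner ℝ g (‖v‖⁻¹ • v) := by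
  rw [real_inner_smul_right, real_inner_comm, inv_mul_eq_div, le_div_iff₀ hv]
  linarith

theorem inner_sub_eq_inner_sub_sub_inner_sub (q c μ g : E) :
    inner ℝ (μ - c) g = inner ℝ (q - c) g - inner ℝ (q - μ) g := by
  rw [← inner_sub_left, sub_sub_sub_cancel_left]

end

theorem stmt10_general {d k : ℕ} (c μv g : EuclideanSpace ℝ (Fin d)) (r₀ dst : ℝ) (hr₀ : 0 < r₀)
    (hfar : 4 * r₀ ≤ ‖μv - c‖) (hd : ‖μv - c‖ - r₀ ≤ dst)
    (Q : Fin k → EuclideanSpace ℝ (Fin d))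
    (hj : ∃ j, dst ≤ (inner ℝ (Q j - c) g : ℝ) ∧ (inner ℝ (Q j - μv) g : ℝ) ≤ r₀) :
    (1 : ℝ) / 2 ≤ (inner ℝ g ((‖μv - c‖)⁻¹ • (μv - c)) : ℝ) := by
  obtain ⟨j, hQc, hQμ⟩ := hj
  apply half_le_inner_smul_inv_norm (by linarith)
  rw [inner_sub_eq_inner_sub_sub_inner_sub (Q j)]
  linarith

/-- Gradient-direction estimate: if `‖μ - c‖ ≥ 4 r₀`, `g` is a unit vector,
`dist ≥ ‖μ - c‖ - r₀`, and some point `Q_j` satisfies `⟪Q_j - c, g⟫ ≥ dist` and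
`⟪Q_j - μ, g⟫ ≤ r₀`, then `⟪g, (μ - c)/‖μ - c‖⟫ ≥ 1/2`. -/
theorem stmt10 {d k : ℕ} (c μv g : EuclideanSpace ℝ (Fin d)) (r₀ dst : ℝ) (hr₀ : 0 < r₀)
    (hfar : 4 * r₀ ≤ ‖μv - c‖) (hg : ‖g‖ = 1) (hd : ‖μv - c‖ - r₀ ≤ dst)
    (Q : Fin k → EuclideanSpace ℝ (Fin d))
    (hj : ∃ j, dst ≤ (inner ℝ (Q j - c) g : ℝ) ∧ (inner ℝ (Q j - μv) g : ℝ) ≤ r₀) :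
    (1 : ℝ) / 2 ≤ (inner ℝ g ((‖μv - c‖)⁻¹ • (μv - c)) : ℝ) :=
  stmt10_general c μv g r₀ dst hr₀ hfar hd Q hj
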